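/- arXiv:1802.01997 — 7 statements merged into one kernel-verified Lean document; each statement's English description precedes it below -/
import Mathlib

section
/- An online algorithm for the ordinal matroid secretary problem is α ordinal-competitive (i.e., E[w(ALG)] ≥ w(OPT)/α for every nonnegative weight function w compatible with the value order) if and only if for every k ∈ [n], E[|ALG ∩ R^k|] ≥ |OPT ∩ R^k| / α, where R^k denotes the top k elements of R in the value order. -/
/-!
Abel summation writes a weight compatible with the value order as the nonnegative combination
`w = ∑ₖ (w(r^k) - w(r^{k+1})) 𝟙_{R^k}`. Both sides of the competitive inequality are linear in `w`,
so it holds for all compatible weights as soon as it holds for the indicators `𝟙_{R^k}`, which is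
the top-`k` condition; conversely these indicators are themselves compatible weights.
-/

open Finset

/-- The top `k` elements `R^k = {r^1, …, r^k}` of the ground set `Fin n`,
where smaller index means higher in the value order (`r^1 ≻ ⋯ ≻ r^n`). -/
def topk (n k : ℕ) : Finset (Fin n) := Finset.univ.filter fun i => (i : ℕ) < k

/-- `rankWeight w k = w(r^{k+1})` (indices of `Fin n` are 0-based), extended by the convention
`w(r^{n+1}) = 0`. -/
def rankWeight {n : ℕ} (w : Fin n → ℝ) (k : ℕ) : ℝ :=
  if h : k < n then w ⟨k, h⟩ else 0

lemma mem_topk {n k : ℕ} {i : Fin n} : i ∈ topk n k ↔ (i : ℕ) < k := by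
  simp [topk]

lemma antitone_indicator_topk (n k : ℕ) :
    Antitone fun i : Fin n => if i ∈ topk n k then (1 : ℝ) else 0 := by
  intro i j (hij : (i : ℕ) ≤ j)
  simp only [mem_topk]
  split_ifs <;> first | omega | norm_num

lemma rankWeight_sub_succ_nonneg {n : ℕ} {w : Fin n → ℝ} (hw0 : ∀ i, 0 ≤ w i)
    (hw : Antitone w) (k : ℕ) : 0 ≤ rankWeight w k - rankWeight w (k + 1) := by
  rw [sub_nonneg]
  unfold rankWeight
  split_ifs <;> first | exact hw (Fin.mk_le_mk.2 k.le_succ) | exact hw0 _ | omega | rfl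

lemma eq_sum_rankWeight_sub_mul_indicator_topk {n : ℕ} (w : Fin n → ℝ) (i : Fin n) :
    w i = ∑ k ∈ range n,
      (rankWeight w k - rankWeight w (k + 1)) * if i ∈ topk n (k + 1) then 1 else 0 := by
  have hfilter : {k ∈ range n | i ∈ topk n (k + 1)} = Ico (i : ℕ) n := by
    ext k
    simp only [mem_filter, mem_range, mem_topk, mem_Ico]
    omega
  have htelescope := sum_Ico_sub (fun k => -rankWeight w k) i.2.le
  simp only [neg_sub_neg] at htelescope
  simp only [mul_ite, mul_one, mul_zero]
  rw [← sum_filter, hfilter, htelescope]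
  simp [rankWeight]

lemma sum_eq_sum_rankWeight_sub_mul_card_inter_topk {n : ℕ} (w : Fin n → ℝ)
    (S : Finset (Fin n)) :
    ∑ i ∈ S, w i = ∑ k ∈ range n,
      (rankWeight w k - rankWeight w (k + 1)) * (#(S ∩ topk n (k + 1)) : ℝ) := by
  conv_lhs => rw [sum_congr rfl fun i _ => eq_sum_rankWeight_sub_mul_indicator_topk w i]
  rw [sum_comm]
  simp only [← mul_sum, sum_boole, filter_mem_eq_inter]

lemma sum_mul_sum_eq_sum_rankWeight_sub_mul {n : ℕ} {Ω : Type*} [Fintype Ω] (μ : Ω → ℝ)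
    (ALG : Ω → Finset (Fin n)) (w : Fin n → ℝ) :
    ∑ ω, μ ω * ∑ i ∈ ALG ω, w i = ∑ k ∈ range n,
      (rankWeight w k - rankWeight w (k + 1)) * ∑ ω, μ ω * (#(ALG ω ∩ topk n (k + 1)) : ℝ) := by
  simp only [sum_eq_sum_rankWeight_sub_mul_card_inter_topk w, mul_sum]
  rw [sum_comm]
  exact sum_congr rfl fun k _ => sum_congr rfl fun ω _ => mul_left_comm _ _ _

theorem ordinal_competitive_iff_topk_general {n : ℕ} {Ω : Type*} [Fintype Ω]
    (μ : Ω → ℝ)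
    (ALG : Ω → Finset (Fin n)) (OPT : Finset (Fin n))
    (a : ℝ) :
    (∀ w : Fin n → ℝ, (∀ i, 0 ≤ w i) → (∀ i j : Fin n, i ≤ j → w j ≤ w i) →
        (∑ i ∈ OPT, w i) / a ≤ ∑ ω, μ ω * ∑ i ∈ ALG ω, w i) ↔
    (∀ k, 1 ≤ k → k ≤ n →
        ((OPT ∩ topk n k).card : ℝ) / a ≤ ∑ ω, μ ω * ((ALG ω ∩ topk n k).card : ℝ)) := by
  constructor
  · intro h k _ _
    simpa only [sum_boole, filter_mem_eq_inter] using
      h _ (fun i => by positivity) (antitone_indicator_topk n k)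
  · intro h w hw0 hw
    rw [sum_eq_sum_rankWeight_sub_mul_card_inter_topk, sum_mul_sum_eq_sum_rankWeight_sub_mul,
      sum_div]
    refine sum_le_sum fun k hk => ?_
    rw [mul_div_assoc]
    exact mul_le_mul_of_nonneg_left (h (k + 1) k.succ_pos (mem_range.1 hk))
      (rankWeight_sub_succ_nonneg hw0 hw k)

/-- An algorithm (modelled by its random output `ALG` on a finite probability space
`(Ω, μ)`) is `α` ordinal-competitive, i.e. `E[w(ALG)] ≥ w(OPT)/α` for every nonnegative
weight function compatible with the value order, if and only if for every `k ∈ [n]`,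
`E[|ALG ∩ R^k|] ≥ |OPT ∩ R^k|/α`. -/
theorem ordinal_competitive_iff_topk {n : ℕ} {Ω : Type*} [Fintype Ω]
    (μ : Ω → ℝ) (hμ0 : ∀ ω, 0 ≤ μ ω) (hμ1 : ∑ ω, μ ω = 1)
    (ALG : Ω → Finset (Fin n)) (OPT : Finset (Fin n))
    (a : ℝ) (ha : 1 ≤ a) :
    (∀ w : Fin n → ℝ, (∀ i, 0 ≤ w i) → (∀ i j : Fin n, i ≤ j → w j ≤ w i) →
        (∑ i ∈ OPT, w i) / a ≤ ∑ ω, μ ω * ∑ i ∈ ALG ω, w i) ↔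
    (∀ k, 1 ≤ k → k ≤ n →
        ((OPT ∩ topk n k).card : ℝ) / a ≤ ∑ ω, μ ω * ((ALG ω ∩ topk n k).card : ℝ)) :=
  ordinal_competitive_iff_topk_general μ ALG OPT a
end

section
/- Let B be a base of a matroid M and X an independent set of M. Then there exists an injection π : X → B such that for every x ∈ X, the set B + x − π(x) is independent (indeed a base). -/
/-!
By Hall's theorem it suffices to show that any `k` elements of `X` can together be exchanged
into `B` against at least `k` elements of `B`. For `x ∉ B`, every element of the fundamental
circuit of `x` in `B` other than `x` can be exchanged for `x`, so `x` lies in the closure of its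
exchange set. Hence an independent `S ⊆ X` lies in the closure of the union of the exchange
sets of its elements, and this union has at least `|S|` elements.
-/

open Set

theorem exists_injective_forall_mem_of_encard_le_encard_biUnion {ι α : Type*} {t : ι → Set α}
    (ht : ∀ i, (t i).Finite) (hall : ∀ s : Set ι, s.encard ≤ (⋃ i ∈ s, t i).encard) :
    ∃ f : ι → α, Function.Injective f ∧ ∀ i, f i ∈ t i := by
  classical
  have hcoe (s : Finset ι) : ↑(s.biUnion fun i ↦ (ht i).toFinset) = ⋃ i ∈ (s : Set ι), t i := by
    simp
  simpa using (Finset.all_card_le_biUnion_card_iff_exists_injective fun i ↦ (ht i).toFinset).1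
    fun s ↦ by
      have h := hall s
      rwa [← hcoe, encard_coe_eq_coe_finsetCard, encard_coe_eq_coe_finsetCard, Nat.cast_le] at h

namespace Matroid

variable {α : Type*} {M : Matroid α} {B I T : Set α} {x : α}

def baseExchangeSet (M : Matroid α) (B : Set α) (x : α) : Set α :=
  {y ∈ B | M.IsBase (insert x (B \ {y}))}

lemma Indep.encard_le_encard_of_subset_closure (hI : M.Indep I) (hIT : I ⊆ M.closure T) :
    I.encard ≤ T.encard :=
  calc I.encard ≤ M.eRk (M.closure T) := hI.encard_le_eRk_of_subset hIT
    _ = M.eRk T := M.eRk_closure_eq T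
    _ ≤ T.encard := M.eRk_le_encard T

lemma IsBase.fundCircuit_sdiff_subset_baseExchangeSet (hB : M.IsBase B) (hxE : x ∈ M.E)
    (hxB : x ∉ B) : M.fundCircuit x B \ {x} ⊆ M.baseExchangeSet B x := by
  rintro y ⟨hyC, hyx : y ≠ x⟩
  have hyB : y ∈ B := by simpa [hyx] using M.fundCircuit_subset_insert x B hyC
  have hindep := (hB.indep.mem_fundCircuit_iff (by rwa [hB.closure_eq]) hxB).1 hyC
  rw [← insert_sdiff_singleton_comm hyx.symm] at hindep
  exact ⟨hyB, hB.exchange_isBase_of_indep hxB hindep⟩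

lemma IsBase.mem_closure_baseExchangeSet (hB : M.IsBase B) (hxE : x ∈ M.E) :
    x ∈ M.closure (M.baseExchangeSet B x) := by
  by_cases hxB : x ∈ B
  · refine M.subset_closure _ (sep_subset _ _ |>.trans hB.subset_ground) ⟨hxB, ?_⟩
    rwa [insert_sdiff_singleton, insert_eq_of_mem hxB]
  have hC := hB.fundCircuit_isCircuit hxE hxB
  exact M.closure_subset_closure (hB.fundCircuit_sdiff_subset_baseExchangeSet hxE hxB)
    (hC.mem_closure_sdiff_singleton_of_mem (M.mem_fundCircuit x B))

lemma IsBase.encard_le_encard_biUnion_baseExchangeSet (hB : M.IsBase B) (hI : M.Indep I) :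
    I.encard ≤ (⋃ x ∈ I, M.baseExchangeSet B x).encard :=
  hI.encard_le_encard_of_subset_closure fun _ hx ↦
    M.closure_subset_closure (subset_biUnion_of_mem hx)
      (hB.mem_closure_baseExchangeSet (hI.subset_ground hx))

end Matroid

open Matroid in
/-- Let `B` be a base of a (finite) matroid `M` and `X` an independent set. Then there
is an injection `π : X → B` such that for every `x ∈ X`, `B + x − π(x)` is independent
— indeed a base. -/
theorem exists_base_exchange_injection {α : Type*} (M : Matroid α) [M.Finite]
    (B X : Set α) (hB : M.IsBase B) (hX : M.Indep X) :
    ∃ π : α → α, Set.InjOn π X ∧ Set.MapsTo π X B ∧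
      ∀ x ∈ X, M.IsBase (insert x (B \ {π x})) := by
  obtain ⟨f, hf_inj, hf_mem⟩ :=
    exists_injective_forall_mem_of_encard_le_encard_biUnion
      (t := fun x : X ↦ M.baseExchangeSet B x) (fun _ ↦ hB.finite.subset (sep_subset _ _))
      fun s ↦ by simpa [Subtype.val_injective.encard_image, biUnion_image] using
        hB.encard_le_encard_biUnion_baseExchangeSet (hX.subset image_val_subset)
  set π := Function.extend Subtype.val f id
  have hπ (x : X) : π x = f x := Subtype.val_injective.extend_apply ..
  refine ⟨π, fun a ha b hb hab ↦ ?_, fun a ha ↦ ?_, fun a ha ↦ ?_⟩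
  · exact congrArg Subtype.val (hf_inj (by simpa [hπ ⟨a, ha⟩, hπ ⟨b, hb⟩] using hab))
  · simpa [hπ ⟨a, ha⟩] using (hf_mem ⟨a, ha⟩).1
  · simpa [hπ ⟨a, ha⟩] using (hf_mem ⟨a, ha⟩).2
end

section
/- Let r_1, ..., r_n be a uniformly random ordering of the n elements of a matroid of rank ρ, let R_i = {r_1,...,r_i}, and let B = {r_i : r_i ∈ OPT(R_i), s+1 ≤ i ≤ n} for a fixed s ∈ {0,...,n}. Then E[|B|] ≤ (H_n − H_s)·ρ, where H_j is the j-th harmonic number. -/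
open Finset

variable {α : Type*} [Fintype α] [DecidableEq α]

/-- `R_t`: the set of the first `t` arrivals under the arrival order `σ`
(position `i : Fin n` holds the `(i+1)`-st arriving element `σ i`). -/
def arrivedSet {n : ℕ} (σ : Fin n ≃ α) (t : ℕ) : Finset α :=
  (Finset.univ.filter fun j : Fin n => (j : ℕ) < t).image σ

/-- `B = {r_i : r_i ∈ OPT(R_i), s+1 ≤ i ≤ n}` for the arrival order `σ`. -/
def improvSet {n : ℕ} (Opt : Finset α → Finset α) (s : ℕ) (σ : Fin n ≃ α) :
    Finset (Fin n) :=
  Finset.univ.filter fun i : Fin n =>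
    s ≤ (i : ℕ) ∧ σ i ∈ Opt (arrivedSet σ ((i : ℕ) + 1))

set_option linter.unusedSectionVars false

lemma arrivedSet_swap {n : ℕ} (σ : Fin n ≃ α) (i j : Fin n) (t : ℕ)
    (hi : (i:ℕ) < t) (hj : (j:ℕ) < t) :
    arrivedSet ((Equiv.swap i j).trans σ) t = arrivedSet σ t := by
  unfold arrivedSet
  have h : (Finset.univ.filter fun k : Fin n => (k : ℕ) < t).image (Equiv.swap i j)
      = Finset.univ.filter fun k : Fin n => (k : ℕ) < t := by
    ext k
    simp only [mem_image, mem_filter, mem_univ, true_and]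
    constructor
    · rintro ⟨m, hm, rfl⟩
      by_cases h1 : m = i
      · simpa [h1] using hj
      · by_cases h2 : m = j
        · simpa [h2] using hi
        · simpa [Equiv.swap_apply_of_ne_of_ne h1 h2] using hm
    · intro hk
      refine ⟨Equiv.swap i j k, ?_, by simp⟩
      by_cases h1 : k = i
      · simpa [h1] using hj
      · by_cases h2 : k = j
        · simpa [h2] using hi
        · simpa [Equiv.swap_apply_of_ne_of_ne h1 h2] using hk
  calc ((Finset.univ.filter fun k : Fin n => (k : ℕ) < t).image fun k => σ (Equiv.swap i j k))
      = ((Finset.univ.filter fun k : Fin n => (k : ℕ) < t).image (Equiv.swap i j)).image σ := by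
        rw [Finset.image_image]; rfl
    _ = _ := by rw [h]

lemma card_opt_eq {n : ℕ} (σ : Fin n ≃ α) (t : ℕ) (Opt : Finset α → Finset α)
    (hOptSub : ∀ Q, Opt Q ⊆ Q) :
    (Finset.univ.filter fun j : Fin n =>
      (j:ℕ) < t ∧ σ j ∈ Opt (arrivedSet σ t)).card = (Opt (arrivedSet σ t)).card := by
  apply Finset.card_bij (fun j _ => σ j)
  · intro j hj; exact (mem_filter.mp hj).2.2
  · intro a ha b hb hab; exact σ.injective hab
  · intro a ha
    have : a ∈ arrivedSet σ t := hOptSub _ ha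
    obtain ⟨j, hj, rfl⟩ := Finset.mem_image.mp this
    exact ⟨j, mem_filter.mpr ⟨mem_univ _, (mem_filter.mp hj).2, ha⟩, rfl⟩

-- bijection: counting σ with σ j ∈ Opt equals counting σ with σ i ∈ Opt
lemma count_pos_eq {n : ℕ} (Opt : Finset α → Finset α) (i j : Fin n)
    (hj : (j:ℕ) < (i:ℕ)+1) :
    (Finset.univ.filter fun σ : Fin n ≃ α =>
        σ j ∈ Opt (arrivedSet σ ((i:ℕ)+1))).card =
    (Finset.univ.filter fun σ : Fin n ≃ α =>
        σ i ∈ Opt (arrivedSet σ ((i:ℕ)+1))).card := by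
  have hi : (i:ℕ) < (i:ℕ)+1 := Nat.lt_succ_self _
  apply Finset.card_bij' (fun σ _ => (Equiv.swap j i).trans σ)
    (fun σ _ => (Equiv.swap j i).trans σ)
  · intro σ hσ
    simp only [mem_filter, mem_univ, true_and] at hσ ⊢
    rw [arrivedSet_swap σ j i _ hj hi]
    simpa using hσ
  · intro σ hσ
    simp only [mem_filter, mem_univ, true_and] at hσ ⊢
    rw [arrivedSet_swap σ j i _ hj hi]
    simpa using hσ
  · intro σ _
    ext k
    simp [Equiv.swap_apply_self]
  · intro σ _
    ext k
    simp [Equiv.swap_apply_self]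

lemma key_count {n ρ : ℕ} (Opt : Finset α → Finset α)
    (hOptSub : ∀ Q, Opt Q ⊆ Q) (hOptCard : ∀ Q, (Opt Q).card ≤ ρ) (i : Fin n) :
    ((i:ℕ)+1) * (Finset.univ.filter fun σ : Fin n ≃ α =>
        σ i ∈ Opt (arrivedSet σ ((i:ℕ)+1))).card ≤ ρ * Fintype.card (Fin n ≃ α) := by
  set N := (Finset.univ.filter fun σ : Fin n ≃ α =>
        σ i ∈ Opt (arrivedSet σ ((i:ℕ)+1))).card with hN
  have h1 : ∑ σ : Fin n ≃ α, (Opt (arrivedSet σ ((i:ℕ)+1))).card ≤ ρ * Fintype.card (Fin n ≃ α) := by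
    rw [mul_comm]
    calc ∑ σ : Fin n ≃ α, (Opt (arrivedSet σ ((i:ℕ)+1))).card
        ≤ ∑ σ : Fin n ≃ α, ρ := Finset.sum_le_sum fun σ _ => hOptCard _
      _ = Fintype.card (Fin n ≃ α) * ρ := by rw [Finset.sum_const, Finset.card_univ, smul_eq_mul]
  have h2 : ∑ σ : Fin n ≃ α, (Opt (arrivedSet σ ((i:ℕ)+1))).card = ((i:ℕ)+1) * N := by
    have step : ∀ σ : Fin n ≃ α, (Opt (arrivedSet σ ((i:ℕ)+1))).card
        = ∑ j : Fin n, if (j:ℕ) < (i:ℕ)+1 ∧ σ j ∈ Opt (arrivedSet σ ((i:ℕ)+1)) then 1 else 0 := by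
      intro σ
      rw [← card_opt_eq σ ((i:ℕ)+1) Opt hOptSub, Finset.card_filter]
    calc ∑ σ : Fin n ≃ α, (Opt (arrivedSet σ ((i:ℕ)+1))).card
        = ∑ σ : Fin n ≃ α, ∑ j : Fin n,
            if (j:ℕ) < (i:ℕ)+1 ∧ σ j ∈ Opt (arrivedSet σ ((i:ℕ)+1)) then 1 else 0 := by
          exact Finset.sum_congr rfl fun σ _ => step σ
      _ = ∑ j : Fin n, ∑ σ : Fin n ≃ α,
            if (j:ℕ) < (i:ℕ)+1 ∧ σ j ∈ Opt (arrivedSet σ ((i:ℕ)+1)) then 1 else 0 := by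
          rw [Finset.sum_comm]
      _ = ∑ j : Fin n, if (j:ℕ) < (i:ℕ)+1 then N else 0 := by
          refine Finset.sum_congr rfl fun j _ => ?_
          by_cases hj : (j:ℕ) < (i:ℕ)+1
          · simp only [hj, true_and, if_true]
            rw [← Finset.card_filter]
            exact count_pos_eq Opt i j hj
          · simp [hj]
      _ = ((i:ℕ)+1) * N := by
          rw [Finset.sum_ite, Finset.sum_const_zero, add_zero, Finset.sum_const, smul_eq_mul]
          congr 1
          have : (Finset.univ.filter fun j : Fin n => (j:ℕ) < (i:ℕ)+1) = Finset.Iic i := by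
            ext j
            simp only [mem_filter, mem_univ, true_and, Finset.mem_Iic, Fin.le_def, Nat.lt_succ_iff]
          rw [this, Fin.card_Iic]
  omega

/-- Under a uniformly random arrival order of the `n` elements of a rank-`ρ` matroid,
`E[|B|] ≤ (H_n − H_s)·ρ`, where `B` is the set of post-sample arrivals that belong to
the current optimum and `H_j` is the `j`-th harmonic number. -/
theorem expected_improving_le_harmonic (n ρ s : ℕ) (hcard : Fintype.card α = n)
    (hs : s ≤ n) (Opt : Finset α → Finset α)
    (hOptSub : ∀ Q, Opt Q ⊆ Q) (hOptCard : ∀ Q, (Opt Q).card ≤ ρ) :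
    ∑ σ : Fin n ≃ α, ((improvSet Opt s σ).card : ℝ) ≤
      (Fintype.card (Fin n ≃ α) : ℝ) *
        (((∑ i ∈ Finset.range n, (1 : ℝ) / (i + 1)) -
          ∑ i ∈ Finset.range s, (1 : ℝ) / (i + 1)) * ρ) := by
  set C : ℝ := (Fintype.card (Fin n ≃ α) : ℝ) with hC
  have hC0 : 0 ≤ C := Nat.cast_nonneg _
  -- step 1: rewrite LHS as a double sum and swap
  have h1 : ∑ σ : Fin n ≃ α, ((improvSet Opt s σ).card : ℝ)
      = ∑ i : Fin n, ∑ σ : Fin n ≃ α,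
          (if s ≤ (i:ℕ) ∧ σ i ∈ Opt (arrivedSet σ ((i:ℕ)+1)) then (1:ℝ) else 0) := by
    rw [Finset.sum_comm]
    refine Finset.sum_congr rfl fun σ _ => ?_
    rw [improvSet, Finset.card_filter]
    push_cast
    rfl
  rw [h1]
  -- step 2: bound the inner sum for each i
  have h2 : ∀ i : Fin n, ∑ σ : Fin n ≃ α,
      (if s ≤ (i:ℕ) ∧ σ i ∈ Opt (arrivedSet σ ((i:ℕ)+1)) then (1:ℝ) else 0)
      ≤ if s ≤ (i:ℕ) then C * ρ / ((i:ℕ)+1) else 0 := by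
    intro i
    by_cases hsi : s ≤ (i:ℕ)
    · simp only [hsi, true_and, if_true]
      have : ∑ σ : Fin n ≃ α,
          (if σ i ∈ Opt (arrivedSet σ ((i:ℕ)+1)) then (1:ℝ) else 0)
          = ((Finset.univ.filter fun σ : Fin n ≃ α =>
              σ i ∈ Opt (arrivedSet σ ((i:ℕ)+1))).card : ℝ) := by
        rw [Finset.card_filter]; push_cast; rfl
      rw [this]
      have hk := key_count Opt hOptSub hOptCard i
      have hpos : (0:ℝ) < (i:ℕ)+1 := by positivity
      rw [le_div_iff₀ hpos]
      calc ((Finset.univ.filter fun σ : Fin n ≃ α =>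
              σ i ∈ Opt (arrivedSet σ ((i:ℕ)+1))).card : ℝ) * ((i:ℕ)+1)
          = ((((i:ℕ)+1) * (Finset.univ.filter fun σ : Fin n ≃ α =>
              σ i ∈ Opt (arrivedSet σ ((i:ℕ)+1))).card : ℕ) : ℝ) := by push_cast; ring
        _ ≤ ((ρ * Fintype.card (Fin n ≃ α) : ℕ) : ℝ) := by exact_mod_cast hk
        _ = C * ρ := by push_cast [hC]; ring
    · simp [hsi]
  -- step 3: combine
  calc ∑ i : Fin n, ∑ σ : Fin n ≃ α,
          (if s ≤ (i:ℕ) ∧ σ i ∈ Opt (arrivedSet σ ((i:ℕ)+1)) then (1:ℝ) else 0)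
      ≤ ∑ i : Fin n, (if s ≤ (i:ℕ) then C * ρ / ((i:ℕ)+1) else 0) :=
        Finset.sum_le_sum fun i _ => h2 i
    _ = ∑ i ∈ Finset.range n, (if s ≤ i then C * ρ / (i+1) else 0) := by
        rw [Finset.sum_range fun i => if s ≤ i then C * ρ / (i+1) else 0]
    _ = ∑ i ∈ Finset.Ico s n, C * ρ / (i+1) := by
        rw [Finset.sum_ite, Finset.sum_const_zero, add_zero]
        refine Finset.sum_congr ?_ fun _ _ => rfl
        ext j
        simp [Finset.mem_Ico, and_comm]
    _ = C * ρ * ∑ i ∈ Finset.Ico s n, (1:ℝ) / (i+1) := by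
        rw [Finset.mul_sum]
        refine Finset.sum_congr rfl fun i _ => ?_
        field_simp
    _ = C * (((∑ i ∈ Finset.range n, (1 : ℝ) / (i + 1)) -
          ∑ i ∈ Finset.range s, (1 : ℝ) / (i + 1)) * ρ) := by
        rw [Finset.sum_Ico_eq_sub _ hs]
        ring
end

section
/- Consider the greedy online algorithm on the partition matroid M_{m,M} whose parts are m singletons {r^1},...,{r^m} and M blocks of m consecutive elements each, with elements arriving in uniformly random order. Then for every element r^i with i ≤ m, Pr(r^i ∈ ALG) = 1; for every i > m, Pr(r^i ∈ ALG) = 1/m; consequently for every k, E[|ALG ∩ R^k|] = min(k,m) + max(k−m,0)/m, and the algorithm is (1 + 1/m) ordinal-competitive, i.e., |OPT ∩ R^k| ≤ (1+1/m)·E[|ALG ∩ R^k|] for all k. -/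
open Finset

/-- The part of element `i`: the first `m` elements are singleton parts, and the
remaining elements come in consecutive blocks of size `m`. -/
def part (m : ℕ) {n : ℕ} (i : Fin n) : ℕ :=
  if (i : ℕ) < m then (i : ℕ) else m + ((i : ℕ) - m) / m

/-- Independence in the partition matroid: at most one element per part. -/
def pIndep (m : ℕ) {n : ℕ} (S : Finset (Fin n)) : Prop :=
  ∀ i ∈ S, ∀ j ∈ S, part m i = part m j → i = j

instance (m n : ℕ) (S : Finset (Fin n)) : Decidable (pIndep m S) :=
  inferInstanceAs (Decidable (∀ i ∈ S, ∀ j ∈ S, part m i = part m j → i = j))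

/-- The greedy online algorithm run on arrival order `σ` (the `t`-th arrival is `σ t`):
select each arriving element iff it keeps the current selection independent. -/
def greedyALG (m : ℕ) {n : ℕ} (σ : Equiv.Perm (Fin n)) : Finset (Fin n) :=
  (List.ofFn fun t => σ t).foldl
    (fun S r => if pIndep m (insert r S) then insert r S else S) ∅

/-!
Greedy keeps exactly the first arrival of each part, where `σ.symm i` is the arrival time of
`i`. Hence the element of a singleton part is always kept, while an element of a block of size
`m` is kept in exactly a `1/m` fraction of the orders: transpositions inside the block permute
the events "`i` arrives first in its block". Linearity over `R^k` gives the expectation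
`min(k,m) + (k - min(k,m))/m`. Every greedy output, `OPT` included, has at most one element per
part, and `R^k` meets at most `min(k,m) + ⌊(k-1)/m⌋` parts, which is at most `(1 + 1/m)` times
that expectation.
-/

section Greedy

variable {α β : Type*} [DecidableEq α] [DecidableEq β] (f : α → β)

theorem mem_foldl_greedy_iff (P : Finset α → Prop) [DecidablePred P]
    (hP : ∀ S, P S ↔ Set.InjOn f S) (l : List α) (x : α) :
    x ∈ l.foldl (fun S r => if P (insert r S) then insert r S else S) ∅ ↔
      l.find? (fun y => f y = f x) = some x := by
  induction l using List.reverseRecOn generalizing x with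
  | nil => simp
  | append_singleton l a ih =>
    set S := l.foldl (fun S r => if P (insert r S) then insert r S else S) ∅
    have hS : Set.InjOn f S := fun y hy z hz hyz => by
      rw [mem_coe, ih] at hy hz
      rw [hyz] at hy
      exact Option.some_injective _ (hy.symm.trans hz)
    rw [List.foldl_append, List.foldl_cons, List.foldl_nil, List.find?_append]
    by_cases hxa : f x = f a
    · rw [hxa]
      rcases hfind : l.find? (fun y => f y = f a) with _ | b
      · have hnot : ∀ y ∈ S, f y ≠ f a := fun y hy hya => by
          rw [ih, hya, hfind] at hy
          cases hy
        have hind : P (insert a S) := by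
          rw [hP, coe_insert, Set.injOn_insert (fun ha => hnot a ha rfl)]
          exact ⟨hS, fun ⟨y, hy, hya⟩ => hnot y hy hya⟩
        rw [if_pos hind, mem_insert, ih, hxa, hfind]
        simp [eq_comm]
      · have hba : f b = f a := by simpa using List.find?_some hfind
        have hbS : b ∈ S := by rw [ih, hba, hfind]
        have hstep : (if P (insert a S) then insert a S else S) = S := by
          split_ifs with hind
          · rw [hP, coe_insert] at hind
            rw [hind (Set.mem_insert a _) (Set.mem_insert_of_mem a hbS) hba.symm]
            exact insert_eq_of_mem hbS
          · rfl
        rw [hstep, ih, hxa, hfind, Option.some_or]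
    · have : [a].find? (fun y => f y = f x) = none := by simp [Ne.symm hxa]
      rw [this, Option.or_none, ← ih]
      split_ifs
      · rw [mem_insert, or_iff_right (by rintro rfl; exact hxa rfl)]
      · rfl

end Greedy

theorem Equiv.Perm.find?_ofFn_eq_some_iff {n : ℕ} (σ : Equiv.Perm (Fin n)) (p : Fin n → Bool)
    (x : Fin n) :
    (List.ofFn fun t => σ t).find? p = some x ↔ p x ∧ ∀ y, p y → σ.symm x ≤ σ.symm y := by
  have := List.find?_ofFn_eq_some_of_injective (p := p) σ.injective (i := σ.symm x)
  rw [Equiv.apply_symm_apply] at this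
  rw [this, and_congr_right_iff]
  intro _
  refine ⟨fun h y hy => not_lt.1 fun hlt => h _ hlt (by simpa using hy), fun h j hj hp => ?_⟩
  exact (h _ hp).not_gt (by simpa using hj)

theorem mem_greedyALG_iff (m : ℕ) {n : ℕ} (σ : Equiv.Perm (Fin n)) (i : Fin n) :
    i ∈ greedyALG m σ ↔ ∀ j, part m j = part m i → σ.symm i ≤ σ.symm j := by
  rw [greedyALG, mem_foldl_greedy_iff (part m) (pIndep m) (fun _ => Iff.rfl),
    σ.find?_ofFn_eq_some_iff]
  simp

theorem injOn_part_greedyALG (m : ℕ) {n : ℕ} (σ : Equiv.Perm (Fin n)) :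
    Set.InjOn (part m) (greedyALG m σ : Set (Fin n)) := fun i hi j hj hij => by
  rw [mem_coe, mem_greedyALG_iff] at hi hj
  exact σ.symm.injective ((hi j hij.symm).antisymm (hj i hij))

theorem sum_card_inter_eq_sum_card_filter {ι α : Type*} [DecidableEq α] (s : Finset ι)
    (B : ι → Finset α) (t : Finset α) :
    ∑ x ∈ s, #(B x ∩ t) = ∑ a ∈ t, #{x ∈ s | a ∈ B x} := by
  simp_rw [card_filter, inter_comm, ← filter_mem_eq_inter, card_filter]
  exact sum_comm

section FirstArrival

variable {α : Type*} [Fintype α] [LinearOrder α]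

def firstArrivals (P : Finset α) (i : α) : Finset (Equiv.Perm α) :=
  {σ | ∀ j ∈ P, σ.symm i ≤ σ.symm j}

theorem card_firstArrivals_le {P : Finset α} {i j : α} (hi : i ∈ P) (hj : j ∈ P) :
    #(firstArrivals P i) ≤ #(firstArrivals P j) := by
  refine card_le_card_of_injOn (Equiv.swap i j * ·) (fun σ hσ => ?_)
    (fun σ _ τ _ h => mul_left_cancel h)
  simp only [firstArrivals, coe_filter, mem_univ, true_and, Set.mem_ofPred_eq] at hσ ⊢
  intro l hl
  simp only [Equiv.Perm.mul_def, Equiv.symm_trans_apply, Equiv.symm_swap, Equiv.swap_apply_right]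
  refine hσ _ ?_
  rcases eq_or_ne l i with rfl | hli
  · rwa [Equiv.swap_apply_left]
  rcases eq_or_ne l j with rfl | hlj
  · rwa [Equiv.swap_apply_right]
  rwa [Equiv.swap_apply_of_ne_of_ne hli hlj]

theorem card_firstArrivals_mul_card {P : Finset α} {i : α} (hi : i ∈ P) :
    #(firstArrivals P i) * #P = Fintype.card (Equiv.Perm α) := by
  have hcover : P.biUnion (firstArrivals P) = univ := eq_univ_of_forall fun σ => by
    obtain ⟨j, hj, hmin⟩ := exists_min_image P (fun j => σ.symm j) ⟨i, hi⟩
    exact mem_biUnion.2 ⟨j, hj, by simpa [firstArrivals] using hmin⟩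
  have hdisj : (P : Set α).PairwiseDisjoint (firstArrivals P) := by
    intro j hj l hl hjl
    refine disjoint_left.2 fun σ hσj hσl => hjl (σ.symm.injective ?_)
    simp only [firstArrivals, mem_filter, mem_univ, true_and] at hσj hσl
    exact (hσj l hl).antisymm (hσl j hj)
  rw [← card_univ, ← hcover, card_biUnion hdisj,
    sum_congr rfl fun j hj => (card_firstArrivals_le hj hi).antisymm (card_firstArrivals_le hi hj),
    sum_const, smul_eq_mul, mul_comm]

end FirstArrival

section Part

variable {m n : ℕ}

theorem part_eq_part_iff_of_lt {i : Fin n} (hi : (i : ℕ) < m) (j : Fin n) :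
    part m j = part m i ↔ j = i := by
  unfold part
  generalize ((j : ℕ) - m) / m = d
  rw [Fin.ext_iff]
  split_ifs <;> omega

theorem part_eq_add_iff (hm : 0 < m) (q : ℕ) (j : Fin n) :
    part m j = m + q ↔ m + q * m ≤ (j : ℕ) ∧ (j : ℕ) < m + q * m + m := by
  have := Nat.div_eq_iff (x := (j : ℕ) - m) (y := q) hm
  unfold part
  split_ifs with hj <;> omega

theorem card_filter_part_eq_of_le {M : ℕ} (hm : 0 < m) (hn : n = (M + 1) * m) {i : Fin n}
    (hi : m ≤ (i : ℕ)) : #{j : Fin n | part m j = part m i} = m := by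
  set q := ((i : ℕ) - m) / m
  have hpi : part m i = m + q := if_neg (not_lt.2 hi)
  have hqM : q < M := by
    have hin : (i : ℕ) < (M + 1) * m := hn ▸ i.isLt
    rw [add_one_mul, mul_comm] at hin
    exact Nat.div_lt_of_lt_mul (by omega)
  have hend : m + q * m + m ≤ n := by
    have := Nat.mul_le_mul_right m (Nat.succ_le_of_lt hqM)
    rw [hn]
    nlinarith
  have hclass : map Fin.valEmbedding {j : Fin n | part m j = m + q} =
      Ico (m + q * m) (m + q * m + m) := by
    ext j
    simp only [mem_map, mem_filter, mem_univ, true_and, Fin.valEmbedding_apply, mem_Ico,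
      part_eq_add_iff hm]
    exact ⟨by rintro ⟨j, hj, rfl⟩; exact hj, fun hj => ⟨⟨j, by omega⟩, hj, rfl⟩⟩
  rw [← card_map Fin.valEmbedding, hpi, hclass, Nat.card_Ico, Nat.add_sub_cancel_left]

theorem part_lt_of_lt (hm : 0 < m) {i : Fin n} {k : ℕ} (hik : (i : ℕ) < k) :
    part m i < min k m + (k - 1) / m := by
  unfold part
  split_ifs with him
  · exact Nat.lt_add_right _ (lt_min hik him)
  · have hk : (k - 1) / m = (k - 1 - m) / m + 1 := Nat.div_eq_sub_div hm (by omega)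
    have := Nat.div_le_div_right (c := m) (show (i : ℕ) - m ≤ k - 1 - m by omega)
    omega

end Part

theorem card_topk {n k : ℕ} (hk : k ≤ n) : #(topk n k) = k := by
  rw [topk, Fin.card_filter_val_lt, min_eq_right hk]

theorem mem_greedyALG_of_lt {m n : ℕ} {i : Fin n} (hi : (i : ℕ) < m) (σ : Equiv.Perm (Fin n)) :
    i ∈ greedyALG m σ :=
  (mem_greedyALG_iff m σ i).2 fun j hj => by rw [(part_eq_part_iff_of_lt hi j).1 hj]

theorem card_filter_mem_greedyALG_mul (m : ℕ) {n : ℕ} (i : Fin n) :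
    #{σ | i ∈ greedyALG m σ} * #{j : Fin n | part m j = part m i} =
      Fintype.card (Equiv.Perm (Fin n)) := by
  rw [← card_firstArrivals_mul_card (P := {j : Fin n | part m j = part m i}) (i := i) (by simp)]
  congr 2
  ext σ
  simp [firstArrivals, mem_greedyALG_iff]

theorem card_filter_mem_greedyALG_mul_of_le {m M n : ℕ} (hm : 0 < m) (hn : n = (M + 1) * m)
    {i : Fin n} (hi : m ≤ (i : ℕ)) :
    #{σ | i ∈ greedyALG m σ} * m = Fintype.card (Equiv.Perm (Fin n)) := by
  rw [← card_filter_mem_greedyALG_mul m i, card_filter_part_eq_of_le hm hn hi]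

theorem cast_card_filter_mem_greedyALG {m M n : ℕ} (hm : 0 < m) (hn : n = (M + 1) * m)
    (i : Fin n) :
    (#{σ | i ∈ greedyALG m σ} : ℝ) =
      Fintype.card (Equiv.Perm (Fin n)) * if (i : ℕ) < m then 1 else (m : ℝ)⁻¹ := by
  split_ifs with hi
  · rw [mul_one, filter_true_of_mem fun σ _ => mem_greedyALG_of_lt hi σ, card_univ]
  · rw [← card_filter_mem_greedyALG_mul_of_le hm hn (not_lt.1 hi), Nat.cast_mul,
      mul_inv_cancel_right₀ (by exact_mod_cast hm.ne')]

theorem sum_ite_lt_topk {m n k : ℕ} (hk : k ≤ n) (a b : ℝ) :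
    ∑ i ∈ topk n k, (if (i : ℕ) < m then a else b) =
      ((min k m : ℕ) : ℝ) * a + ((k : ℝ) - (min k m : ℕ)) * b := by
  have hlt : ({i ∈ topk n k | (i : ℕ) < m} : Finset (Fin n)) = topk n (min k m) := by
    ext i
    simp [topk]
  have hcard := card_filter_add_card_filter_not (s := topk n k) (fun i : Fin n => (i : ℕ) < m)
  rw [hlt, card_topk hk, card_topk ((min_le_left k m).trans hk)] at hcard
  rw [sum_ite, sum_const, sum_const, hlt, card_topk ((min_le_left k m).trans hk),
    Nat.eq_sub_of_add_eq' hcard, nsmul_eq_mul, nsmul_eq_mul, Nat.cast_sub (min_le_left k m)]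

theorem sum_card_greedyALG_inter_topk {m M n k : ℕ} (hm : 0 < m) (hn : n = (M + 1) * m)
    (hk : k ≤ n) :
    ∑ σ : Equiv.Perm (Fin n), (#(greedyALG m σ ∩ topk n k) : ℝ) =
      (Fintype.card (Equiv.Perm (Fin n)) : ℝ) * ((min k m : ℕ) + ((k : ℝ) - (min k m : ℕ)) / m) := by
  calc ∑ σ : Equiv.Perm (Fin n), (#(greedyALG m σ ∩ topk n k) : ℝ)
      = ∑ i ∈ topk n k, (#{σ | i ∈ greedyALG m σ} : ℝ) := by
        exact_mod_cast sum_card_inter_eq_sum_card_filter univ (greedyALG m) (topk n k)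
    _ = ∑ i ∈ topk n k,
          (Fintype.card (Equiv.Perm (Fin n)) * if (i : ℕ) < m then 1 else (m : ℝ)⁻¹) :=
        sum_congr rfl fun i _ => cast_card_filter_mem_greedyALG hm hn i
    _ = _ := by
      rw [← mul_sum, sum_ite_lt_topk hk, mul_one, div_eq_mul_inv]

theorem card_greedyALG_inter_topk_le {m n : ℕ} (hm : 0 < m) (σ : Equiv.Perm (Fin n)) (k : ℕ) :
    #(greedyALG m σ ∩ topk n k) ≤ min k m + (k - 1) / m := by
  have hinj : Set.InjOn (part m) (greedyALG m σ ∩ topk n k : Finset (Fin n)) :=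
    (injOn_part_greedyALG m σ).mono (coe_subset.2 inter_subset_left)
  calc #(greedyALG m σ ∩ topk n k) = #((greedyALG m σ ∩ topk n k).image (part m)) :=
        (card_image_of_injOn hinj).symm
    _ ≤ #(range (min k m + (k - 1) / m)) := by
        refine card_le_card (image_subset_iff.2 fun i hi => mem_range.2 (part_lt_of_lt hm ?_))
        simpa [topk] using (mem_inter.1 hi).2
    _ = _ := card_range _

theorem cast_min_add_div_le {m : ℕ} (hm : 0 < m) (k : ℕ) :
    ((min k m + (k - 1) / m : ℕ) : ℝ) ≤
      (1 + 1 / (m : ℝ)) * ((min k m : ℕ) + ((k : ℝ) - (min k m : ℕ)) / m) := by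
  rcases le_or_gt k m with hkm | hkm
  · rw [min_eq_left hkm, Nat.div_eq_of_lt (by omega), add_zero, sub_self, zero_div, add_zero]
    have : (0 : ℝ) ≤ 1 / m * k := by positivity
    linarith
  · have hmk : (m : ℝ) ≤ k := by exact_mod_cast hkm.le
    have hdiv : (((k - 1) / m : ℕ) : ℝ) ≤ k / m :=
      Nat.cast_div_le.trans (by gcongr; exact_mod_cast Nat.sub_le k 1)
    have hexpand : (1 + 1 / m) * (m + (k - m) / m) = (k / m + m + (k - m) / m / m : ℝ) := by
      field_simp
      ring
    have : (0 : ℝ) ≤ (k - m) / m / m := by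
      have := sub_nonneg.2 hmk
      positivity
    rw [min_eq_right hkm.le, Nat.cast_add, hexpand]
    linarith

theorem greedy_partition_matroid_ordinal_general (m M n : ℕ) (hm : 1 ≤ m)
    (hn : n = (M + 1) * m) :
    (∀ i : Fin n, (i : ℕ) < m → ∀ σ : Equiv.Perm (Fin n), i ∈ greedyALG m σ) ∧
    (∀ i : Fin n, m ≤ (i : ℕ) →
      (Finset.univ.filter fun σ : Equiv.Perm (Fin n) => i ∈ greedyALG m σ).card * m =
        Fintype.card (Equiv.Perm (Fin n))) ∧
    (∀ k, k ≤ n →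
      ∑ σ : Equiv.Perm (Fin n), ((greedyALG m σ ∩ topk n k).card : ℝ) =
        (Fintype.card (Equiv.Perm (Fin n)) : ℝ) *
          ((min k m : ℕ) + ((k : ℝ) - (min k m : ℕ)) / m)) ∧
    (∀ k, k ≤ n →
      (((greedyALG m (1 : Equiv.Perm (Fin n)) ∩ topk n k).card : ℝ)) ≤
        (1 + 1 / (m : ℝ)) *
          ((∑ σ : Equiv.Perm (Fin n), ((greedyALG m σ ∩ topk n k).card : ℝ)) /
            (Fintype.card (Equiv.Perm (Fin n)) : ℝ))) := by
  refine ⟨fun i hi σ => mem_greedyALG_of_lt hi σ,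
    fun i hi => card_filter_mem_greedyALG_mul_of_le hm hn hi,
    fun k hk => sum_card_greedyALG_inter_topk hm hn hk, fun k hk => ?_⟩
  rw [sum_card_greedyALG_inter_topk hm hn hk, mul_div_cancel_left₀ _ (by positivity)]
  exact (Nat.cast_le.2 (card_greedyALG_inter_topk_le hm 1 k)).trans (cast_min_add_div_le hm k)

/-- Greedy on the partition matroid `M_{m,M}` (`m` singleton parts, `M` blocks of size
`m`) under a uniformly random order: `Pr(r^i ∈ ALG) = 1` for `i ≤ m`,
`Pr(r^i ∈ ALG) = 1/m` for `i > m`; hence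
`E[|ALG ∩ R^k|] = min(k,m) + max(k−m,0)/m`, and the algorithm is `(1+1/m)`
ordinal-competitive: `|OPT ∩ R^k| ≤ (1+1/m)·E[|ALG ∩ R^k|]` for every `k`.
(The optimum `OPT` is greedy's output on the arrival order of decreasing value,
i.e. the identity permutation.) -/
theorem greedy_partition_matroid_ordinal (m M n : ℕ) (hm : 1 ≤ m) (hM : 1 ≤ M)
    (hn : n = (M + 1) * m) :
    (∀ i : Fin n, (i : ℕ) < m → ∀ σ : Equiv.Perm (Fin n), i ∈ greedyALG m σ) ∧
    (∀ i : Fin n, m ≤ (i : ℕ) →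
      (Finset.univ.filter fun σ : Equiv.Perm (Fin n) => i ∈ greedyALG m σ).card * m =
        Fintype.card (Equiv.Perm (Fin n))) ∧
    (∀ k, k ≤ n →
      ∑ σ : Equiv.Perm (Fin n), ((greedyALG m σ ∩ topk n k).card : ℝ) =
        (Fintype.card (Equiv.Perm (Fin n)) : ℝ) *
          ((min k m : ℕ) + ((k : ℝ) - (min k m : ℕ)) / m)) ∧
    (∀ k, k ≤ n →
      (((greedyALG m (1 : Equiv.Perm (Fin n)) ∩ topk n k).card : ℝ)) ≤
        (1 + 1 / (m : ℝ)) *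
          ((∑ σ : Equiv.Perm (Fin n), ((greedyALG m σ ∩ topk n k).card : ℝ)) /
            (Fintype.card (Equiv.Perm (Fin n)) : ℝ))) :=
  greedy_partition_matroid_ordinal_general m M n hm hn
end

section
/- Fix r* ∈ [n] and X ⊆ [n] \ {r*}, and define F_4(X, r*) as the set consisting of the two closest elements of X ∪ {0} to the left of r* and the two closest elements of X ∪ {n+1} to the right of r*, with enclosing interval I_4(X, r*) = [second-left, second-right]. Then for any x ∈ X: (a) if x ∈ F_4(X, r*) then I_4(X, r*) ⊆ I_4(X − x, r*); (b) if x ∉ F_4(X, r*) then F_4(X, r*) = F_4(X − x, r*) and I_4(X, r*) = I_4(X − x, r*). -/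
open Finset

/-- `pre_Y(y)`: the largest element of `Y ∪ {0}` strictly less than `y`. -/
def preN (Y : Finset ℕ) (y : ℕ) : ℕ :=
  WithBot.unbotD 0 (((insert 0 Y).filter fun x => x < y).max)

/-- `nex_Y(y)`: the smallest element of `Y ∪ {n+1}` strictly greater than `y`. -/
def nexN (Y : Finset ℕ) (n y : ℕ) : ℕ :=
  WithTop.untopD (n + 1) (((insert (n + 1) Y).filter fun x => y < x).min)

/-- The forbidden set `F_4(X, r*)`: the two closest elements of `X ∪ {0}` to the left
of `r*` and the two closest elements of `X ∪ {n+1}` to the right of `r*`. -/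
def F4 (X : Finset ℕ) (n r : ℕ) : Finset ℕ :=
  {preN X (preN (insert r X) r), preN (insert r X) r,
    nexN (insert r X) n r, nexN X n (nexN (insert r X) n r)}

/-- The enclosing interval `I_4(X, r*)` of `F_4(X, r*)`. -/
def I4 (X : Finset ℕ) (n r : ℕ) : Finset ℕ :=
  Finset.Icc (preN X (preN (insert r X) r)) (nexN X n (nexN (insert r X) n r))

/-!
Since `r*` is neither strictly below nor strictly above itself, inserting it into `X` does not
change `pre` and `nex` at `r*`, so `F_4` and `I_4` are built from `pre_X`, `pre_X ∘ pre_X`, `nex_X`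
and `nex_X ∘ nex_X` at `r*`. Shrinking `X` can only move `pre_X` down and `nex_X` up, and both are
monotone in their argument; this gives (a). Erasing an element that is not the value of
`pre_X(y)` (resp. `nex_X(y)`) does not change that value; this gives (b).
-/

lemma mem_insert_erase_of_ne {α : Type*} [DecidableEq α] {a m x : α} {Y : Finset α}
    (hm : m ∈ insert a Y) (hmx : m ≠ x) :
    m ∈ insert a (Y.erase x) := by
  rw [mem_insert, mem_erase] at *
  tauto

section pre

variable {Y Z : Finset ℕ} {x y z : ℕ}

lemma preN_eq_max' (h : ((insert 0 Y).filter fun w => w < y).Nonempty) :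
    preN Y y = ((insert 0 Y).filter fun w => w < y).max' h := by
  rw [preN, ← coe_max' h]
  rfl

@[simp]
lemma preN_zero (Y : Finset ℕ) : preN Y 0 = 0 := by
  simp [preN]

lemma preN_mem (Y : Finset ℕ) (y : ℕ) : preN Y y ∈ insert 0 Y := by
  rcases ((insert 0 Y).filter fun w => w < y).eq_empty_or_nonempty with h | h
  · simp [preN, h]
  · rw [preN_eq_max' h]
    exact (mem_filter.1 (max'_mem _ h)).1

lemma le_preN (hz : z ∈ insert 0 Y) (hzy : z < y) : z ≤ preN Y y := by
  have hmem : z ∈ (insert 0 Y).filter fun w => w < y := mem_filter.2 ⟨hz, hzy⟩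
  rw [preN_eq_max' ⟨z, hmem⟩]
  exact le_max' _ _ hmem

lemma preN_lt (hy : 0 < y) : preN Y y < y := by
  have h0 : 0 ∈ (insert 0 Y).filter fun w => w < y := mem_filter.2 ⟨mem_insert_self _ _, hy⟩
  rw [preN_eq_max' ⟨0, h0⟩]
  exact (mem_filter.1 (max'_mem _ ⟨0, h0⟩)).2

lemma preN_insert_self (Y : Finset ℕ) (r : ℕ) : preN (insert r Y) r = preN Y r := by
  rw [preN, insert_comm, filter_insert, if_neg (lt_irrefl r), preN]

lemma preN_mono_left (h : Y ⊆ Z) (y : ℕ) : preN Y y ≤ preN Z y := by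
  rcases Nat.eq_zero_or_pos y with rfl | hy
  · simp
  · exact le_preN (insert_subset_insert 0 h (preN_mem Y y)) (preN_lt hy)

lemma preN_mono_right (Y : Finset ℕ) : Monotone (preN Y) := by
  intro y y' h
  rcases Nat.eq_zero_or_pos y with rfl | hy
  · simp
  · exact le_preN (preN_mem Y y) ((preN_lt hy).trans_le h)

lemma preN_erase_of_ne (hx : x ≠ preN Y y) : preN (Y.erase x) y = preN Y y := by
  rcases Nat.eq_zero_or_pos y with rfl | hy
  · simp
  · exact le_antisymm (preN_mono_left (erase_subset x Y) y)
      (le_preN (mem_insert_erase_of_ne (preN_mem Y y) hx.symm) (preN_lt hy))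

end pre

section nex

variable {Y Z : Finset ℕ} {n x y z : ℕ}

lemma nexN_eq_min' (h : ((insert (n + 1) Y).filter fun w => y < w).Nonempty) :
    nexN Y n y = ((insert (n + 1) Y).filter fun w => y < w).min' h := by
  rw [nexN, ← coe_min' h]
  rfl

lemma nexN_mem (Y : Finset ℕ) (n y : ℕ) : nexN Y n y ∈ insert (n + 1) Y := by
  rcases ((insert (n + 1) Y).filter fun w => y < w).eq_empty_or_nonempty with h | h
  · simp [nexN, h]
  · rw [nexN_eq_min' h]
    exact (mem_filter.1 (min'_mem _ h)).1

lemma nexN_le (hz : z ∈ insert (n + 1) Y) (hyz : y < z) : nexN Y n y ≤ z := by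
  have hmem : z ∈ (insert (n + 1) Y).filter fun w => y < w := mem_filter.2 ⟨hz, hyz⟩
  rw [nexN_eq_min' ⟨z, hmem⟩]
  exact min'_le _ _ hmem

lemma lt_nexN_of_mem (hz : z ∈ insert (n + 1) Y) (hyz : y < z) : y < nexN Y n y := by
  have hmem : z ∈ (insert (n + 1) Y).filter fun w => y < w := mem_filter.2 ⟨hz, hyz⟩
  rw [nexN_eq_min' ⟨z, hmem⟩]
  exact (mem_filter.1 (min'_mem _ ⟨z, hmem⟩)).2

lemma lt_nexN (hy : y < n + 1) : y < nexN Y n y :=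
  lt_nexN_of_mem (mem_insert_self _ _) hy

lemma nexN_eq_succ_of_forall_le (h : ∀ w ∈ insert (n + 1) Y, w ≤ y) : nexN Y n y = n + 1 := by
  have hempty : ((insert (n + 1) Y).filter fun w => y < w) = ∅ :=
    filter_eq_empty_iff.2 fun w hw => not_lt.2 (h w hw)
  simp [nexN, hempty]

lemma nexN_eq_succ (hY : ∀ w ∈ Y, w ≤ n + 1) (hy : n + 1 ≤ y) : nexN Y n y = n + 1 :=
  nexN_eq_succ_of_forall_le (forall_mem_insert _ _ _ |>.2 ⟨hy, fun w hw => (hY w hw).trans hy⟩)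

lemma nexN_le_succ (hY : ∀ w ∈ Y, w ≤ n + 1) (y : ℕ) : nexN Y n y ≤ n + 1 := by
  rcases lt_or_ge y (n + 1) with hy | hy
  · exact nexN_le (mem_insert_self _ _) hy
  · exact (nexN_eq_succ hY hy).le

lemma nexN_insert_self (Y : Finset ℕ) (n r : ℕ) : nexN (insert r Y) n r = nexN Y n r := by
  rw [nexN, insert_comm, filter_insert, if_neg (lt_irrefl r), nexN]

lemma nexN_anti_left (h : Y ⊆ Z) (hZ : ∀ w ∈ Z, w ≤ n + 1) (y : ℕ) :
    nexN Z n y ≤ nexN Y n y := by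
  rcases lt_or_ge y (n + 1) with hy | hy
  · exact nexN_le (insert_subset_insert _ h (nexN_mem Y n y)) (lt_nexN hy)
  · rw [nexN_eq_succ hZ hy, nexN_eq_succ (fun w hw => hZ w (h hw)) hy]

lemma nexN_mono_right (hY : ∀ w ∈ Y, w ≤ n + 1) : Monotone (nexN Y n) := by
  intro y y' h
  rcases lt_or_ge y' (n + 1) with hy | hy
  · exact nexN_le (nexN_mem Y n y') (h.trans_lt (lt_nexN hy))
  · exact (nexN_le_succ hY y).trans (nexN_eq_succ hY hy).ge

lemma nexN_erase_of_ne (hx : x ≠ nexN Y n y) : nexN (Y.erase x) n y = nexN Y n y := by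
  by_cases hex : ∃ w ∈ insert (n + 1) Y, y < w
  · obtain ⟨w, hw, hyw⟩ := hex
    have hlt : y < nexN Y n y := lt_nexN_of_mem hw hyw
    have hmem := mem_insert_erase_of_ne (nexN_mem Y n y) hx.symm
    exact le_antisymm (nexN_le hmem hlt) (nexN_le
      (insert_subset_insert _ (erase_subset x Y) (nexN_mem _ n y)) (lt_nexN_of_mem hmem hlt))
  · push Not at hex
    rw [nexN_eq_succ_of_forall_le hex, nexN_eq_succ_of_forall_le
      fun w hw => hex w (insert_subset_insert _ (erase_subset x Y) hw)]

end nex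

theorem F4_I4_monotone_general (n r : ℕ) (X : Finset ℕ) (hX : X ⊆ Finset.Icc 1 n) (x : ℕ) :
    (x ∈ F4 X n r → I4 X n r ⊆ I4 (X.erase x) n r) ∧
    (x ∉ F4 X n r → F4 (X.erase x) n r = F4 X n r ∧ I4 (X.erase x) n r = I4 X n r) := by
  have hXn : ∀ w ∈ X, w ≤ n + 1 := fun w hw => (mem_Icc.1 (hX hw)).2.trans n.le_succ
  have hE : X.erase x ⊆ X := erase_subset x X
  simp only [F4, I4, preN_insert_self, nexN_insert_self]
  refine ⟨fun _ => Icc_subset_Icc ?_ ?_, fun hxF => ?_⟩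
  · calc preN (X.erase x) (preN (X.erase x) r)
        ≤ preN (X.erase x) (preN X r) := preN_mono_right _ (preN_mono_left hE r)
      _ ≤ preN X (preN X r) := preN_mono_left hE _
  · calc nexN X n (nexN X n r)
        ≤ nexN X n (nexN (X.erase x) n r) := nexN_mono_right hXn (nexN_anti_left hE hXn r)
      _ ≤ nexN (X.erase x) n (nexN (X.erase x) n r) := nexN_anti_left hE hXn _
  · simp only [mem_insert, mem_singleton, not_or] at hxF
    obtain ⟨hp2, hp1, hq1, hq2⟩ := hxF
    rw [preN_erase_of_ne hp1, preN_erase_of_ne hp2, nexN_erase_of_ne hq1,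
      nexN_erase_of_ne hq2]
    exact ⟨rfl, rfl⟩

/-- Monotonicity of the forbidden sets for semiplanar gammoids: for `x ∈ X`,
(a) if `x ∈ F_4(X,r*)` then `I_4(X,r*) ⊆ I_4(X−x,r*)`; (b) if `x ∉ F_4(X,r*)` then
`F_4(X,r*) = F_4(X−x,r*)` and `I_4(X,r*) = I_4(X−x,r*)`. -/
theorem F4_I4_monotone (n r : ℕ) (X : Finset ℕ) (hX : X ⊆ Finset.Icc 1 n)
    (hr : r ∈ Finset.Icc 1 n) (hrX : r ∉ X) (x : ℕ) (hx : x ∈ X) :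
    (x ∈ F4 X n r → I4 X n r ⊆ I4 (X.erase x) n r) ∧
    (x ∉ F4 X n r → F4 (X.erase x) n r = F4 X n r ∧ I4 (X.erase x) n r = I4 X n r) :=
  F4_I4_monotone_general n r X hX x
end

section
/- In Algorithm 5 for graphic matroids, the set A of selected oriented arcs always has in-degree at most 1 at every vertex and contains no set whose underlying undirected edge set is a cycle; consequently the underlying undirected edge set of A is a forest and the output ALG is independent in the graphic matroid. -/
/-!
Heads of accepted arcs are pairwise distinct. On a cycle of length `k` the `k` arcs therefore
have `k` distinct heads among the `k` vertices of the cycle, so every vertex of the cycle is the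
head of one of its arcs. This fails at the tail of the latest arc of the cycle: that tail is the
head neither of an earlier arc (acceptance rule) nor of the arc itself (no loops).
-/

open Finset

namespace SimpleGraph.Walk

variable {V : Type*} {G : SimpleGraph V} {v : V}

theorem IsCycle.card_support_toFinset [DecidableEq V] {c : G.Walk v v} (hc : c.IsCycle) :
    c.support.toFinset.card = c.length := by
  have htail : c.support.toFinset = c.support.tail.toFinset := by
    ext x
    simp only [List.mem_toFinset, mem_support_iff]
    refine ⟨?_, Or.inr⟩
    rintro (rfl | hx)
    exacts [end_mem_tail_support hc.not_nil, hx]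
  rw [htail, List.toFinset_card_of_nodup hc.support_nodup, List.length_tail, length_support,
    Nat.add_sub_cancel]

end SimpleGraph.Walk

section Arcs

variable {ι V : Type*} (a : ι → V × V)

def arcGraph : SimpleGraph V :=
  SimpleGraph.fromEdgeSet {e | ∃ i, e = s((a i).1, (a i).2)}

variable [LinearOrder ι]

/-- The acceptance rule of the algorithm, for arcs `a i = (tail, head)` listed in order of
acceptance: when arc `i` is added, neither of its endpoints is the head of an earlier arc. -/
def AvoidsEarlierHeads : Prop :=
  ∀ i j, j < i → (a j).2 ≠ (a i).1 ∧ (a j).2 ≠ (a i).2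

variable {a}

namespace AvoidsEarlierHeads

theorem snd_injective (h : AvoidsEarlierHeads a) : Function.Injective fun i => (a i).2 := by
  intro i j hij
  rcases lt_trichotomy i j with hlt | heq | hgt
  · exact absurd hij (h j i hlt).2
  · exact heq
  · exact absurd hij.symm (h i j hgt).2

theorem sym2_injective (h : AvoidsEarlierHeads a) :
    Function.Injective fun i => s((a i).1, (a i).2) := by
  intro i j hij
  rcases Sym2.eq_iff.mp hij with ⟨-, hsnd⟩ | ⟨hfst, hsnd⟩
  · exact h.snd_injective hsnd
  · rcases lt_trichotomy i j with hlt | heq | hgt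
    · exact absurd hsnd (h j i hlt).1
    · exact heq
    · exact absurd hfst.symm (h i j hgt).1

theorem snd_ne_fst_of_le (h : AvoidsEarlierHeads a) (hloop : ∀ i, (a i).1 ≠ (a i).2) {i j : ι}
    (hji : j ≤ i) : (a j).2 ≠ (a i).1 := by
  rcases hji.lt_or_eq with hlt | rfl
  exacts [(h i j hlt).1, (hloop j).symm]

theorem isAcyclic [Fintype ι] (h : AvoidsEarlierHeads a) (hloop : ∀ i, (a i).1 ≠ (a i).2) :
    (arcGraph a).IsAcyclic := by
  classical
  intro v c hc
  set K := univ.filter fun k => s((a k).1, (a k).2) ∈ c.edges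
  have hK_edges : K.image (fun k => s((a k).1, (a k).2)) = c.edges.toFinset := by
    ext e
    simp only [K, mem_image, mem_filter, mem_univ, true_and, List.mem_toFinset]
    refine ⟨fun ⟨k, hk, hke⟩ => hke ▸ hk, fun he => ?_⟩
    have he' := c.edges_subset_edgeSet he
    rw [arcGraph, SimpleGraph.edgeSet_fromEdgeSet] at he'
    obtain ⟨k, rfl⟩ := he'.1
    exact ⟨k, he, rfl⟩
  have hK_card : K.card = c.length := by
    rw [← card_image_of_injective K h.sym2_injective, hK_edges,
      List.toFinset_card_of_nodup hc.edges_nodup, SimpleGraph.Walk.length_edges]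
  have hK_heads : K.image (fun k => (a k).2) = c.support.toFinset := by
    refine eq_of_subset_of_card_le (fun x hx => ?_) ?_
    · obtain ⟨k, hk, rfl⟩ := mem_image.mp hx
      exact List.mem_toFinset.mpr (c.snd_mem_support_of_mem_edges (mem_filter.mp hk).2)
    · rw [hc.card_support_toFinset, card_image_of_injective K h.snd_injective, hK_card]
  have hK : K.Nonempty := card_pos.mp (by have := hc.three_le_length; omega)
  have hlast : K.max' hK ∈ K := K.max'_mem hK
  have htail : (a (K.max' hK)).1 ∈ (K.image fun k => (a k).2) := by
    rw [hK_heads, List.mem_toFinset]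
    exact c.fst_mem_support_of_mem_edges (mem_filter.mp hlast).2
  obtain ⟨k, hk, hk_head⟩ := mem_image.mp htail
  exact h.snd_ne_fst_of_le hloop (K.le_max' k hk) hk_head

end AvoidsEarlierHeads

end Arcs

/-- Invariant of the algorithm for graphic (and hypergraphic) matroids: the oriented
arcs `a_1, …, a_m` are added one at a time, and an arc is added only when both of its
endpoints currently have in-degree `0` (no earlier arc has its head at either
endpoint). Then every vertex has in-degree at most `1` in the final arc set, the
underlying undirected edge set contains no cycle — i.e. it is a forest — and hence
the output is independent in the graphic matroid. -/
theorem graphic_algorithm_forest {V : Type*} (m : ℕ) (arcs : Fin m → V × V)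
    (hloop : ∀ i, (arcs i).1 ≠ (arcs i).2)
    (hadd : ∀ i j : Fin m, j < i →
      (arcs j).2 ≠ (arcs i).1 ∧ (arcs j).2 ≠ (arcs i).2) :
    (∀ v : V, ∀ i j : Fin m, (arcs i).2 = v → (arcs j).2 = v → i = j) ∧
    (SimpleGraph.fromEdgeSet
        {e : Sym2 V | ∃ i : Fin m, e = s((arcs i).1, (arcs i).2)}).IsAcyclic := by
  have h : AvoidsEarlierHeads arcs := hadd
  exact ⟨fun _ i j hi hj => h.snd_injective (hi.trans hj.symm), h.isAcyclic hloop⟩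
end

section
/- Let r^1 ≻ r^2 ≻ ... ≻ r^n be the elements of a matroid with ground set R, in decreasing value order, and let X_1, ..., X_n be i.i.d. fair coins. Let the coupling procedure process r^1, ..., r^n in this order, maintaining sets V, W initialized empty: when r^i satisfies r^i ∈ OPT(V + r^i), it uses the coin X_i; on heads (X_i = 1) it adds r^i to W, and on tails (X_i = 0) it adds r^i to V. Let Z be the set of elements r^i with X_i = 0 (whether or not r^i was considered). Then V = OPT(Z) and W = {r ∈ R \ Z : r ∈ OPT(Z + r)}. -/
open Finset

open Classical in
/-- The greedy optimum `OPT(Q)` of a matroid on `Fin n`: process the elements of `Q`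
in decreasing value order (`r^1 ≻ ⋯ ≻ r^n`, i.e. increasing index), keeping an element
whenever it preserves independence. -/
noncomputable def greedyOptF {n : ℕ} (M : Matroid (Fin n)) (Q : Finset (Fin n)) :
    Finset (Fin n) :=
  ((List.finRange n).filter (· ∈ Q)).foldl
    (fun S r => if M.Indep ↑(insert r S) then insert r S else S) ∅

open Classical in
/-- The coupling procedure: process `r^1 ≻ ⋯ ≻ r^n` in decreasing value order with
coins `X`; when `r ∈ OPT(V + r)`, add `r` to `W` if its coin is heads (`true`) and to
`V` if tails (`false`). -/
noncomputable def couple {n : ℕ} (M : Matroid (Fin n)) (X : Fin n → Bool) :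
    Finset (Fin n) × Finset (Fin n) :=
  (List.finRange n).foldl
    (fun S r =>
      if r ∈ greedyOptF M (insert r S.1) then
        (if X r then (S.1, insert r S.2) else (insert r S.1, S.2))
      else S)
    (∅, ∅)

namespace CoupleAux

open Classical

variable {n : ℕ} (M : Matroid (Fin n))

/-- The single step of the greedy procedure. -/
noncomputable def gstep (S : Finset (Fin n)) (r : Fin n) : Finset (Fin n) :=
  if M.Indep ↑(insert r S) then insert r S else S

/-- The greedy procedure run over a list of elements. -/
noncomputable def gfold (l : List (Fin n)) : Finset (Fin n) :=
  l.foldl (gstep M) ∅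

lemma greedyOptF_eq (Q : Finset (Fin n)) :
    greedyOptF M Q = gfold M ((List.finRange n).filter (· ∈ Q)) := rfl

/-- The single step of the coupling procedure. -/
noncomputable def cstep (X : Fin n → Bool)
    (S : Finset (Fin n) × Finset (Fin n)) (r : Fin n) :
    Finset (Fin n) × Finset (Fin n) :=
  if r ∈ greedyOptF M (insert r S.1) then
    (if X r then (S.1, insert r S.2) else (insert r S.1, S.2))
  else S

lemma couple_eq (X : Fin n → Bool) :
    couple M X = (List.finRange n).foldl (cstep M X) (∅, ∅) := rfl

variable {M}

lemma mem_foldl_of_mem {l : List (Fin n)} {S : Finset (Fin n)} {x : Fin n} (h : x ∈ S) :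
    x ∈ l.foldl (gstep M) S := by
  induction l generalizing S with
  | nil => exact h
  | cons a l ih =>
    refine ih ?_
    unfold gstep; split <;> simp [h]

lemma mem_foldl_iff {l : List (Fin n)} {S : Finset (Fin n)} {x : Fin n} (hx : x ∉ l) :
    x ∈ l.foldl (gstep M) S ↔ x ∈ S := by
  induction l generalizing S with
  | nil => rfl
  | cons a l ih =>
    simp only [List.mem_cons, not_or] at hx
    rw [List.foldl_cons, ih hx.2]
    unfold gstep; split <;> simp [hx.1]

lemma mem_of_mem_foldl {l : List (Fin n)} {S : Finset (Fin n)} {x : Fin n}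
    (h : x ∈ l.foldl (gstep M) S) : x ∈ S ∨ x ∈ l := by
  induction l generalizing S with
  | nil => exact .inl h
  | cons a l ih =>
    rcases ih h with h' | h'
    · unfold gstep at h'
      split at h'
      · rcases Finset.mem_insert.1 h' with h' | h'
        · exact .inr (by simp [h'])
        · exact .inl h'
      · exact .inl h'
    · simp [h']

lemma mem_of_mem_gfold {l : List (Fin n)} {x : Fin n} (h : x ∈ gfold M l) : x ∈ l := by
  rcases mem_of_mem_foldl h with h' | h'
  · simp at h'
  · exact h'

lemma mem_gstep_self_iff {S : Finset (Fin n)} {a : Fin n} (ha : a ∉ S) :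
    a ∈ gstep M S a ↔ M.Indep ↑(insert a S) := by
  unfold gstep
  by_cases h : M.Indep ↑(insert a S)
  · rw [if_pos h]; exact iff_of_true (Finset.mem_insert_self a S) h
  · rw [if_neg h]; exact iff_of_false ha h

lemma gfold_append_singleton (l : List (Fin n)) (a : Fin n) :
    gfold M (l ++ [a]) = gstep M (gfold M l) a := by
  simp [gfold, List.foldl_append]

/-- Greedy consistency: running greedy over only the elements accepted by greedy
produces the same output. -/
lemma gfold_filter_self {l : List (Fin n)} (hl : l.Nodup) :
    gfold M (l.filter (· ∈ gfold M l)) = gfold M l := by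
  induction l using List.reverseRecOn with
  | nil => simp [gfold]
  | append_singleton l a ih =>
    rw [List.nodup_append] at hl
    obtain ⟨hln, -, hd⟩ := hl
    have hal : a ∉ l := fun h => hd a h a (by simp) rfl
    have hfold : gfold M (l ++ [a]) = gstep M (gfold M l) a := gfold_append_singleton l a
    by_cases h : M.Indep ↑(insert a (gfold M l))
    · have hga : gfold M (l ++ [a]) = insert a (gfold M l) := by
        rw [hfold]; unfold gstep; rw [if_pos h]
      rw [hga, List.filter_append]
      have h1 : l.filter (· ∈ insert a (gfold M l)) = l.filter (· ∈ gfold M l) := by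
        refine List.filter_congr fun x hx => ?_
        have : x ≠ a := fun he => hal (he ▸ hx)
        simp [Finset.mem_insert, this]
      have h2 : [a].filter (· ∈ insert a (gfold M l)) = [a] := by simp
      rw [h1, h2, gfold_append_singleton, ih hln]
      unfold gstep; rw [if_pos h]
    · have hga : gfold M (l ++ [a]) = gfold M l := by
        rw [hfold]; unfold gstep; exact if_neg h
      rw [hga, List.filter_append]
      have h2 : [a].filter (· ∈ gfold M l) = [] := by
        have : a ∉ gfold M l := fun h => hal (mem_of_mem_gfold h)
        simp [this]
      rw [h2, List.append_nil, ih hln]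

/-- Key fact: if `V` is the greedy output over the `Z`-elements of the prefix `l`, then
the greedy optimum of `V + a` is just one greedy step applied to `V`. -/
lemma greedyOptF_insert_gfold (Z : Finset (Fin n)) {l t : List (Fin n)} {a : Fin n}
    (hfr : List.finRange n = l ++ a :: t) :
    greedyOptF M (insert a (gfold M (l.filter (· ∈ Z)))) =
      gstep M (gfold M (l.filter (· ∈ Z))) a := by
  have hnd : (l ++ a :: t).Nodup := hfr ▸ List.nodup_finRange n
  rw [List.nodup_append] at hnd
  obtain ⟨hln, hat, hd⟩ := hnd
  have hal : a ∉ l := fun h => hd a h a (by simp) rfl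
  have hant : a ∉ t := by
    rw [List.nodup_cons] at hat; exact hat.1
  set V := gfold M (l.filter (· ∈ Z)) with hV
  have hVmem : ∀ x ∈ V, x ∈ l ∧ x ∈ Z := by
    intro x hx
    have := mem_of_mem_gfold hx
    simpa using this
  have h1 : l.filter (· ∈ insert a V) = l.filter (· ∈ V) := by
    refine List.filter_congr fun x hx => ?_
    have : x ≠ a := fun he => hal (he ▸ hx)
    simp [Finset.mem_insert, this]
  have h2 : (a :: t).filter (· ∈ insert a V) = [a] := by
    rw [List.filter_cons_of_pos (by simp)]
    have : t.filter (· ∈ insert a V) = [] := by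
      rw [List.filter_eq_nil_iff]
      intro x hx
      have hxa : x ≠ a := fun he => hant (he ▸ hx)
      have hxV : x ∉ V := fun h => hd x (hVmem x h).1 x (by simp [hx]) rfl
      simp [Finset.mem_insert, hxa, hxV]
    rw [this]
  have h3 : l.filter (· ∈ V) = (l.filter (· ∈ Z)).filter (· ∈ V) := by
    rw [List.filter_filter]
    refine List.filter_congr fun x hx => ?_
    by_cases hxv : x ∈ V
    · simp [hxv, (hVmem x hxv).2]
    · simp [hxv]
  rw [greedyOptF_eq, hfr, List.filter_append, h1, h2, gfold_append_singleton, h3,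
    gfold_filter_self (hln.filter _)]

lemma not_mem_gfold_of_not_mem {l : List (Fin n)} {Z : Finset (Fin n)} {a : Fin n}
    (hal : a ∉ l) : a ∉ gfold M (l.filter (· ∈ Z)) := fun h =>
  hal (List.mem_of_mem_filter (mem_of_mem_gfold h))

/-- Key fact: whether `a ∉ Z` belongs to `OPT(Z + a)` is decided at `a`'s step of the
greedy procedure, i.e. by independence with the greedy output on the prefix. -/
lemma mem_greedyOptF_insert_iff (Z : Finset (Fin n)) {l t : List (Fin n)} {a : Fin n}
    (hfr : List.finRange n = l ++ a :: t) (haZ : a ∉ Z) :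
    a ∈ greedyOptF M (insert a Z) ↔
      M.Indep ↑(insert a (gfold M (l.filter (· ∈ Z)))) := by
  have hnd : (l ++ a :: t).Nodup := hfr ▸ List.nodup_finRange n
  rw [List.nodup_append] at hnd
  obtain ⟨hln, hat, hd⟩ := hnd
  have hal : a ∉ l := fun h => hd a h a (by simp) rfl
  have hant : a ∉ t := by
    rw [List.nodup_cons] at hat; exact hat.1
  have h1 : l.filter (· ∈ insert a Z) = l.filter (· ∈ Z) := by
    refine List.filter_congr fun x hx => ?_
    have : x ≠ a := fun he => hal (he ▸ hx)
    simp [Finset.mem_insert, this]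
  rw [greedyOptF_eq, hfr, List.filter_append, List.filter_cons_of_pos (by simp), h1]
  have h2 : gfold M (l.filter (· ∈ Z) ++ a :: t.filter (· ∈ insert a Z)) =
      (t.filter (· ∈ insert a Z)).foldl (gstep M)
        (gstep M (gfold M (l.filter (· ∈ Z))) a) := by
    simp [gfold, List.foldl_append]
  rw [h2, mem_foldl_iff (fun h => hant (List.mem_of_mem_filter h)),
    mem_gstep_self_iff (not_mem_gfold_of_not_mem hal)]

/-- The coupling invariant, proved by induction on the unprocessed suffix `t`. -/
lemma couple_main (X : Fin n → Bool) :
    ∀ (t l : List (Fin n)), List.finRange n = l ++ t →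
    t.foldl (cstep M X)
      (gfold M (l.filter (· ∈ Finset.univ.filter fun r => X r = false)),
       l.toFinset.filter fun r => X r = true ∧
         r ∈ greedyOptF M (insert r (Finset.univ.filter fun r' => X r' = false))) =
    (gfold M ((l ++ t).filter (· ∈ Finset.univ.filter fun r => X r = false)),
     (l ++ t).toFinset.filter fun r => X r = true ∧
       r ∈ greedyOptF M (insert r (Finset.univ.filter fun r' => X r' = false))) := by
  intro t
  induction t with
  | nil => intro l _; simp
  | cons a t ih =>
    intro l hfr
    set Z : Finset (Fin n) := Finset.univ.filter fun r => X r = false with hZdef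
    have haZ : a ∈ Z ↔ X a = false := by simp [hZdef]
    have hnd : (l ++ a :: t).Nodup := hfr ▸ List.nodup_finRange n
    rw [List.nodup_append] at hnd
    obtain ⟨hln, hat, hd⟩ := hnd
    have hal : a ∉ l := fun h => hd a h a (by simp) rfl
    set V := gfold M (l.filter (· ∈ Z)) with hVdef
    set W := l.toFinset.filter (fun r => X r = true ∧
      r ∈ greedyOptF M (insert r Z)) with hWdef
    have hcond : a ∈ greedyOptF M (insert a V) ↔ M.Indep ↑(insert a V) := by
      rw [greedyOptF_insert_gfold Z hfr,
        mem_gstep_self_iff (not_mem_gfold_of_not_mem hal)]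
    have hVstep : gfold M ((l ++ [a]).filter (· ∈ Z)) =
        if X a = false then gstep M V a else V := by
      rw [List.filter_append]
      by_cases hx : X a = false
      · rw [if_pos hx]
        have : [a].filter (· ∈ Z) = [a] := by simp [haZ.2 hx]
        rw [this, gfold_append_singleton]
      · rw [if_neg hx]
        have : [a].filter (· ∈ Z) = [] := by
          have : a ∉ Z := fun h => hx (haZ.1 h)
          simp [this]
        rw [this, List.append_nil]
    have hWstep : (l ++ [a]).toFinset.filter (fun r => X r = true ∧
        r ∈ greedyOptF M (insert r Z)) =
        if X a = true ∧ M.Indep ↑(insert a V) then insert a W else W := by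
      have htf : (l ++ [a]).toFinset = insert a l.toFinset := by
        ext x; simp [or_comm]
      rw [htf, Finset.filter_insert]
      by_cases hx : X a = true
      · have haZ' : a ∉ Z := by simp [hZdef, hx]
        have hmem : a ∈ greedyOptF M (insert a Z) ↔ M.Indep ↑(insert a V) :=
          mem_greedyOptF_insert_iff Z hfr haZ'
        by_cases hi : M.Indep ↑(insert a V)
        · rw [if_pos ⟨hx, hmem.2 hi⟩, if_pos ⟨hx, hi⟩]
        · rw [if_neg (fun h => hi (hmem.1 h.2)), if_neg (fun h => hi h.2)]
      · rw [if_neg (fun h => hx h.1), if_neg (fun h => hx h.1)]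
    have hstep : cstep M X (V, W) a =
        (gfold M ((l ++ [a]).filter (· ∈ Z)),
         (l ++ [a]).toFinset.filter (fun r => X r = true ∧
           r ∈ greedyOptF M (insert r Z))) := by
      rw [hVstep, hWstep]
      unfold cstep
      by_cases hi : M.Indep ↑(insert a V)
      · have hg : gstep M V a = insert a V := by unfold gstep; exact if_pos hi
        rw [if_pos (hcond.2 hi)]
        cases hx : X a with
        | false =>
          rw [if_neg (by simp), if_pos rfl, if_neg (by simp), hg]
        | true =>
          rw [if_pos rfl, if_neg (by simp), if_pos ⟨rfl, hi⟩]
      · have hg : gstep M V a = V := by unfold gstep; exact if_neg hi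
        rw [if_neg (fun h => hi (hcond.1 h)), hg, ite_self, if_neg (fun h => hi h.2)]
    rw [List.foldl_cons, hstep,
      ih (l ++ [a]) (by rw [hfr, List.append_assoc, List.singleton_append]),
      List.append_assoc, List.singleton_append]

end CoupleAux

/-- Coupling lemma: with `Z = {r : X r = tails}`, the coupling procedure produces
`V = OPT(Z)` and `W = {r ∈ R \ Z : r ∈ OPT(Z + r)}`. -/
theorem couple_eq_opt {n : ℕ} (M : Matroid (Fin n)) (hE : M.E = Set.univ)
    (X : Fin n → Bool) :
    (couple M X).1 = greedyOptF M (Finset.univ.filter fun r => X r = false) ∧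
    (couple M X).2 = Finset.univ.filter fun r => X r = true ∧
      r ∈ greedyOptF M (insert r (Finset.univ.filter fun r' => X r' = false)) := by
  classical
  have h := CoupleAux.couple_main (M := M) X (List.finRange n) [] (by simp)
  simp only [List.filter_nil, List.toFinset_nil, Finset.filter_empty,
    List.nil_append] at h
  have hinit : CoupleAux.gfold M ([] : List (Fin n)) = ∅ := rfl
  rw [hinit] at h
  rw [CoupleAux.couple_eq, h]
  constructor
  · exact (CoupleAux.greedyOptF_eq M _).symm
  · have : (List.finRange n).toFinset = (Finset.univ : Finset (Fin n)) := by
      ext x; simp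
    rw [this]
end
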